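/- Let D be a finite DAG with vertices partitioned into sources S, internal vertices I, and sinks T, and suppose that for some pair (i,j) there is no directed path in D from i to j. Then for every X ⊆ I with i, j ∉ X, the pair (i,j) is never an edge of D_X. Consequently, vertex elimination never creates an edge between vertices that were not connected by a directed path in the original DAG. -/

import Mathlib

variable {V : Type*} [DecidableEq V] [Fintype V]

/-- In-neighborhood of `v` in the edge set `E`. -/
def inN (E : Finset (V × V)) (v : V) : Finset V :=
  (E.filter fun p => p.2 = v).image Prod.fst

/-- Out-neighborhood of `v` in the edge set `E`. -/
def outN (E : Finset (V × V)) (v : V) : Finset V :=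
  (E.filter fun p => p.1 = v).image Prod.snd

/-- Elimination of vertex `v`: delete `v` and add an edge from every in-neighbor
to every out-neighbor of `v` (if not already present). -/
def elimv (E : Finset (V × V)) (v : V) : Finset (V × V) :=
  (E ∪ (inN E v) ×ˢ (outN E v)).filter fun p => p.1 ≠ v ∧ p.2 ≠ v

/-- Eliminate a sequence of vertices, in order. -/
def elimSeq (E : Finset (V × V)) (σ : List V) : Finset (V × V) :=
  σ.foldl elimv E

/-- Markowitz degree of `v`: in-degree times out-degree. -/
def mark (E : Finset (V × V)) (v : V) : ℕ :=
  (inN E v).card * (outN E v).card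

/-- Cost of an elimination sequence: sum of the Markowitz degrees at the
time of each elimination. -/
def cost (E : Finset (V × V)) : List V → ℕ
  | [] => 0
  | v :: σ => mark E v + cost (elimv E v) σ

/-- The directed graph with edge set `E` is acyclic. -/
def Acyclic (E : Finset (V × V)) : Prop :=
  ∀ v : V, ¬ Relation.TransGen (fun a b => (a, b) ∈ E) v v

/-- `E` is an acyclic digraph whose vertices are partitioned into sources `S`
(no in-edges), internal vertices `I`, and sinks `T` (no out-edges). -/
def IsDAGPartition (E : Finset (V × V)) (S I T : Finset V) : Prop :=
  Acyclic E ∧ Disjoint S I ∧ Disjoint S T ∧ Disjoint I T ∧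
    S ∪ I ∪ T = Finset.univ ∧ (∀ s ∈ S, inN E s = ∅) ∧ (∀ t ∈ T, outN E t = ∅)

/-- There is a directed path from `i` to `j` all of whose internal vertices
lie in `X` (the single-edge path has no internal vertices). -/
def PathThrough (E : Finset (V × V)) (X : Finset V) (i j : V) : Prop :=
  ∃ l : List V, (∀ v ∈ l, v ∈ X) ∧ List.Chain' (fun a b => (a, b) ∈ E) (i :: (l ++ [j]))

/-! Eliminating `v` only adds edges `(a, b)` with `a → v → b` already in the graph, so by
induction along the elimination sequence every edge of `D_X` is realized by a directed path
in `D`. -/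

section

variable {α : Type*} [DecidableEq α] {E : Finset (α × α)} {v a b : α}

lemma mem_inN : a ∈ inN E v ↔ (a, v) ∈ E := by
  simp [inN]

lemma mem_outN : b ∈ outN E v ↔ (v, b) ∈ E := by
  simp [outN]

lemma transGen_of_mem_elimv (h : (a, b) ∈ elimv E v) :
    Relation.TransGen (fun x y => (x, y) ∈ E) a b := by
  simp only [elimv, Finset.mem_filter, Finset.mem_union, Finset.mem_product, mem_inN,
    mem_outN] at h
  obtain ⟨hab | ⟨hav, hvb⟩, -⟩ := h
  · exact .single hab
  · exact .tail (.single hav) hvb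

lemma transGen_of_mem_elimSeq {σ : List α} (h : (a, b) ∈ elimSeq E σ) :
    Relation.TransGen (fun x y => (x, y) ∈ E) a b := by
  induction σ generalizing E a b with
  | nil => exact .single h
  | cons v σ ih =>
    exact Relation.TransGen.closed (fun _ _ => transGen_of_mem_elimv) _ _ (ih h)

end

theorem elimSeq_no_new_connections_general (E : Finset (V × V)) (i j : V)
    (hnp : ¬ Relation.ReflTransGen (fun a b => (a, b) ∈ E) i j)
    (σ : List V) :
    (i, j) ∉ elimSeq E σ :=
  fun h => hnp (transGen_of_mem_elimSeq h).to_reflTransGen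

/-- vertex elimination never creates an edge between vertices
not joined by a directed path in the original DAG. -/
theorem elimSeq_no_new_connections (E : Finset (V × V)) (S I T : Finset V)
    (hD : IsDAGPartition E S I T) (i j : V)
    (hnp : ¬ Relation.ReflTransGen (fun a b => (a, b) ∈ E) i j)
    (X : Finset V) (hX : X ⊆ I) (hi : i ∉ X) (hj : j ∉ X)
    (σ : List V) (hσ : σ.Nodup) (hσX : σ.toFinset = X) :
    (i, j) ∉ elimSeq E σ :=
  elimSeq_no_new_connections_general E i j hnp σ
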